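/- Let (X, ≤) be an inf-semilattice with a locally compact, second-countable Hausdorff topology such that the meet (x, y) ↦ x ⊓ y is continuous from X × X to X, and assume that for all x ≤ y the order interval [x, y] is connected. Then there exists a metric D on X that induces the topology of X and is radially convex with respect to ≤: whenever x ≤ y ≤ z, one has D(x, z) ≥ max{D(x, y), D(y, z)}. -/

import Mathlib

open Set Filter Topology TopologicalSpace

set_option linter.unusedSectionVars false
set_option linter.unusedVariables false
set_option maxHeartbeats 1000000

section RC


variable {X : Type*} [SemilatticeInf X] [TopologicalSpace X] [T2Space X]
    [LocallyCompactSpace X] [SecondCountableTopology X]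

lemma rc_le_closed (hmeet : Continuous fun p : X × X => p.1 ⊓ p.2) :
    IsClosed {p : X × X | p.1 ≤ p.2} := by
  have h : IsClosed {p : X × X | p.1 ⊓ p.2 = p.1} := isClosed_eq hmeet continuous_fst
  convert h using 1
  ext p
  exact (inf_eq_left.symm : (p.1 ≤ p.2) ↔ _)

lemma rc_down_closed (hmeet : Continuous fun p : X × X => p.1 ⊓ p.2) (x : X) :
    IsClosed {z : X | z ≤ x} := by
  have : {z : X | z ≤ x} = (fun z => (z, x)) ⁻¹' {p : X × X | p.1 ≤ p.2} := rfl
  rw [this]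
  exact (rc_le_closed hmeet).preimage (continuous_id.prodMk continuous_const)

lemma rc_up_closed (hmeet : Continuous fun p : X × X => p.1 ⊓ p.2) {C : Set X}
    (hC : IsCompact C) : IsClosed {z : X | ∃ c ∈ C, c ≤ z} := by
  apply IsSeqClosed.isClosed
  intro u p hu hup
  choose c hcC hcle using hu
  obtain ⟨a, haC, σ, hσ, hten⟩ := hC.tendsto_subseq hcC
  refine ⟨a, haC, ?_⟩
  have hmem : ∀ n, (c (σ n), u (σ n)) ∈ {p : X × X | p.1 ≤ p.2} := fun n => hcle (σ n)
  have htend : Tendsto (fun n => (c (σ n), u (σ n))) atTop (𝓝 (a, p)) :=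
    hten.prodMk_nhds (hup.comp hσ.tendsto_atTop)
  exact (rc_le_closed hmeet).mem_of_tendsto htend (Eventually.of_forall hmem)

variable [Nonempty X]

/-- `rcSup φ x = ⨆ c, φ (x ⊓ c)`, i.e. the sup of `φ` over the down-set of `x`
(when `φ` is nonnegative). -/
noncomputable def rcSup (φ : X → ℝ) (x : X) : ℝ := ⨆ c : X, φ (x ⊓ c)

section rcSup

variable {φ : X → ℝ} (h01 : ∀ w, φ w ∈ Icc (0:ℝ) 1)

include h01

lemma rcSup_bdd (x : X) : BddAbove (range fun c : X => φ (x ⊓ c)) :=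
  ⟨1, by rintro r ⟨c, rfl⟩; exact (h01 _).2⟩

lemma rc_le_rcSup (x c : X) : φ (x ⊓ c) ≤ rcSup φ x := le_ciSup (rcSup_bdd h01 x) c

lemma rc_le_rcSup' (x : X) : φ x ≤ rcSup φ x := by
  have := rc_le_rcSup h01 x x
  rwa [inf_idem] at this

lemma rcSup_mem_Icc (x : X) : rcSup φ x ∈ Icc (0:ℝ) 1 :=
  ⟨le_trans (h01 x).1 (rc_le_rcSup' h01 x), ciSup_le fun c => (h01 _).2⟩

lemma rcSup_monotone : Monotone (rcSup φ) := by
  intro x y hxy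
  refine ciSup_le fun c => ?_
  have h1 : y ⊓ (x ⊓ c) = x ⊓ c := inf_eq_right.mpr (le_trans inf_le_left hxy)
  have := rc_le_rcSup h01 y (x ⊓ c)
  rwa [h1] at this

lemma rcSup_eq_zero {x : X} (h : ∀ c, φ (x ⊓ c) = 0) : rcSup φ x = 0 := by
  unfold rcSup
  simp only [h]
  exact ciSup_const

lemma rcSup_continuous (hmeet : Continuous fun p : X × X => p.1 ⊓ p.2)
    (hφc : Continuous φ) (hφs : HasCompactSupport φ) : Continuous (rcSup φ) := by
  have haux : ∀ c : X, Continuous fun y : X => y ⊓ c := fun c =>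
    hmeet.comp (continuous_id.prodMk continuous_const)
  rw [continuous_iff_lower_upperSemicontinuous]
  constructor
  · -- lower semicontinuous
    intro x t ht
    obtain ⟨c, hc⟩ := (lt_ciSup_iff (rcSup_bdd h01 x)).1 ht
    have hopen : IsOpen {y : X | t < φ (y ⊓ c)} :=
      isOpen_lt continuous_const (hφc.comp (haux c))
    filter_upwards [hopen.mem_nhds hc] with y hy
    exact lt_of_lt_of_le hy (rc_le_rcSup h01 y c)
  · -- upper semicontinuous
    intro x t ht
    have hopen : IsOpen {y : X | rcSup φ y < t} := by
      rcases le_or_gt t 0 with ht0 | ht0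
      · have : {y : X | rcSup φ y < t} = ∅ := by
          ext y
          simp only [mem_setOf_eq, mem_empty_iff_false, iff_false, not_lt]
          exact le_trans ht0 (rcSup_mem_Icc h01 y).1
        rw [this]; exact isOpen_empty
      · rw [← isClosed_compl_iff]
        have hcompl : {y : X | rcSup φ y < t}ᶜ = {y : X | t ≤ rcSup φ y} := by
          ext y; simp [not_lt]
        rw [hcompl]
        apply IsSeqClosed.isClosed
        intro u p hu hup
        -- choose near-optimal witnesses
        have hex : ∀ n : ℕ, ∃ c : X, max (t - 1/(n+1)) (t/2) < φ (u n ⊓ c) := by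
          intro n
          refine (lt_ciSup_iff (rcSup_bdd h01 (u n))).1 (lt_of_lt_of_le ?_ (hu n))
          apply max_lt
          · have : (0:ℝ) < 1/(n+1) := by positivity
            linarith
          · linarith
        choose c hc using hex
        set d : ℕ → X := fun n => u n ⊓ c n with hd
        have hdsupp : ∀ n, d n ∈ tsupport φ := by
          intro n
          apply subset_tsupport
          have : (0:ℝ) < φ (d n) := lt_of_le_of_lt (le_trans (by linarith) (le_max_right _ _)) (hc n)
          exact fun h0 => by rw [h0] at this; exact lt_irrefl _ this
        obtain ⟨a, haK, σ, hσ, hten⟩ := hφs.tendsto_subseq hdsupp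
        have hale : a ≤ p := by
          have hmem : ∀ n, (d (σ n), u (σ n)) ∈ {q : X × X | q.1 ≤ q.2} :=
            fun n => inf_le_left
          have htend : Tendsto (fun n => (d (σ n), u (σ n))) atTop (𝓝 (a, p)) :=
            hten.prodMk_nhds (hup.comp hσ.tendsto_atTop)
          exact (rc_le_closed hmeet).mem_of_tendsto htend (Eventually.of_forall hmem)
        have hφa : t ≤ φ a := by
          have h1 : Tendsto (fun n : ℕ => t - 1/(n+1 : ℝ)) atTop (𝓝 t) := by
            have := tendsto_one_div_add_atTop_nhds_zero_nat (𝕜 := ℝ)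
            have h2 := Tendsto.sub (tendsto_const_nhds (x := t) (f := atTop (α := ℕ))) this
            simpa using h2
          have h2 : Tendsto (fun n => φ (d (σ n))) atTop (𝓝 (φ a)) :=
            (hφc.continuousAt.tendsto).comp hten
          refine le_of_tendsto_of_tendsto' h1 h2 fun n => ?_
          have h3 : t - 1/(n+1:ℝ) ≤ t - 1/(σ n + 1 : ℝ) := by
            have hσn : (n:ℝ) ≤ σ n := by exact_mod_cast hσ.le_apply
            have : (1:ℝ)/(σ n + 1) ≤ 1/(n+1) := by
              apply one_div_le_one_div_of_le <;> [positivity; linarith]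
            linarith
          exact le_trans h3 (le_trans (le_max_left _ _) (hc (σ n)).le)
        have : φ a ≤ rcSup φ p := by
          have h4 := rc_le_rcSup h01 p a
          rwa [inf_eq_right.mpr hale] at h4
        exact le_trans hφa this
    exact hopen.mem_nhds ht

end rcSup


variable (hmeet : Continuous fun p : X × X => p.1 ⊓ p.2)

lemma rc_key (hmeet : Continuous fun p : X × X => p.1 ⊓ p.2)
    (hconn : ∀ x y : X, x ≤ y → IsConnected (Set.Icc x y))
    {U : Set X} (hU : IsOpen U) {x : X} (hx : x ∈ U) :
    ∃ f g : X → ℝ,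
      (Continuous f ∧ Monotone f ∧ ∀ w, f w ∈ Icc (0:ℝ) 1) ∧
      (Continuous g ∧ Monotone g ∧ ∀ w, g w ∈ Icc (0:ℝ) 1) ∧
      (1/2 < g x ∧ f x < 1/2) ∧ ∀ y, 1/2 < g y → f y < 1/2 → y ∈ U := by
  -- Step 1: compact neighborhood inside U
  obtain ⟨K₁, hK₁c, hxK₁, hK₁U⟩ := exists_compact_subset hU hx
  set V : Set X := interior K₁ with hV
  have hVopen : IsOpen V := isOpen_interior
  have hxV : x ∈ V := hxK₁
  have hcVK₁ : closure V ⊆ K₁ := closure_minimal interior_subset hK₁c.isClosed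
  have hcVc : IsCompact (closure V) := hK₁c.of_isClosed_subset isClosed_closure hcVK₁
  have hcVU : closure V ⊆ U := hcVK₁.trans hK₁U
  set Fr : Set X := closure V \ V with hFr
  have hFrc : IsCompact Fr := hcVc.inter_right hVopen.isClosed_compl
  -- Step 2: the separation index
  obtain ⟨W, hW⟩ := (𝓝 x).exists_antitone_basis
  have hclaim : ∃ n : ℕ, ∀ z ∈ Fr, z ≤ x → ∀ c ∈ W n, ¬ c ≤ z := by
    by_contra hcon
    push_neg at hcon
    choose z hzFr hzx c hcW hcz using hcon
    have hcx : Tendsto c atTop (𝓝 x) := hW.tendsto hcW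
    obtain ⟨a, haFr, σ, hσ, hten⟩ := hFrc.tendsto_subseq hzFr
    have hax : a ≤ x := by
      have := (rc_down_closed hmeet x).mem_of_tendsto hten
        (Eventually.of_forall fun n => hzx (σ n))
      exact this
    have hxa : x ≤ a := by
      have hmem : ∀ n, (c (σ n), z (σ n)) ∈ {q : X × X | q.1 ≤ q.2} := fun n => hcz (σ n)
      have htend : Tendsto (fun n => (c (σ n), z (σ n))) atTop (𝓝 (x, a)) :=
        ((hcx.comp hσ.tendsto_atTop)).prodMk_nhds hten
      exact (rc_le_closed hmeet).mem_of_tendsto htend (Eventually.of_forall hmem)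
    have : a = x := le_antisymm hax hxa
    rw [this] at haFr
    exact haFr.2 hxV
  obtain ⟨n₀, hn₀⟩ := hclaim
  -- Step 3: small compact neighborhood S of x inside W n₀ ∩ V
  have hNx : W n₀ ∩ V ∈ 𝓝 x := inter_mem (hW.1.mem_of_mem trivial) (hVopen.mem_nhds hxV)
  obtain ⟨S, hSc, hxS, hSN⟩ :=
    exists_compact_subset isOpen_interior (mem_interior_iff_mem_nhds.mpr hNx)
  have hSWn : S ⊆ W n₀ ∩ V := hSN.trans interior_subset
  -- Step 4: the blocking set B
  set B : Set X := Fr ∩ {z : X | ∃ c ∈ S, c ≤ z} with hB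
  have hBc : IsCompact B := hFrc.inter_right (rc_up_closed hmeet hSc)
  have hBnotdown : ∀ z ∈ B, ¬ z ≤ x := by
    rintro z ⟨hzFr, c, hcS, hcz⟩ hzx
    exact hn₀ z hzFr hzx c (hSWn hcS).1 hcz
  -- Step 5: Urysohn functions
  obtain ⟨φ, hφ1, hφ0, hφs, hφ01⟩ :=
    exists_continuous_one_zero_of_isCompact hBc (rc_down_closed hmeet x)
      (Set.disjoint_left.mpr hBnotdown)
  obtain ⟨ψ, hψ1, hψ0, hψs, hψ01⟩ :=
    exists_continuous_one_zero_of_isCompact (isCompact_singleton (x := x))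
      (isClosed_compl_iff.mpr (isOpen_interior (s := S)))
      (disjoint_compl_right_iff_subset.mpr (singleton_subset_iff.mpr hxS))
  -- Step 6: the two monotone functions
  refine ⟨rcSup (φ : X → ℝ), rcSup (ψ : X → ℝ),
    ⟨rcSup_continuous hφ01 hmeet φ.continuous hφs, rcSup_monotone hφ01, rcSup_mem_Icc hφ01⟩,
    ⟨rcSup_continuous hψ01 hmeet ψ.continuous hψs, rcSup_monotone hψ01, rcSup_mem_Icc hψ01⟩,
    ⟨?_, ?_⟩, ?_⟩
  · -- 1/2 < g x
    have h1 : ψ x = 1 := hψ1 rfl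
    have := rc_le_rcSup' hψ01 x
    rw [h1] at this
    linarith
  · -- f x < 1/2
    have h0 : rcSup (φ : X → ℝ) x = 0 := by
      apply rcSup_eq_zero hφ01
      intro c
      exact hφ0 (inf_le_left : x ⊓ c ≤ x)
    rw [h0]; norm_num
  · -- the inclusion
    intro y hgy hfy
    -- extract a witness below y inside S
    have hex : ∃ c : X, 1/2 < ψ (y ⊓ c) := by
      by_contra hcon
      push_neg at hcon
      have : rcSup (ψ : X → ℝ) y ≤ 1/2 := ciSup_le hcon
      linarith
    obtain ⟨c, hc⟩ := hex
    set c' : X := y ⊓ c with hc'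
    have hc'S : c' ∈ S := by
      have hne : (ψ : X → ℝ) c' ≠ 0 := by intro h0; rw [h0] at hc; linarith
      have : c' ∈ (interior S)ᶜ → (ψ : X → ℝ) c' = 0 := fun h => hψ0 h
      by_contra hcS
      exact hne (this fun hmem => hcS (interior_subset hmem))
    have hc'y : c' ≤ y := inf_le_left
    have hc'V : c' ∈ V := (hSWn hc'S).2
    -- rule out boundary crossing
    by_cases hyc : y ∈ closure V
    · exact hcVU hyc
    exfalso
    by_cases hzFr : ∃ z ∈ Icc c' y, z ∈ Fr
    · obtain ⟨z, hzI, hzF⟩ := hzFr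
      have hzB : z ∈ B := ⟨hzF, c', hc'S, hzI.1⟩
      have hφz : (φ : X → ℝ) z = 1 := hφ1 hzB
      have : (φ : X → ℝ) (y ⊓ z) ≤ rcSup (φ : X → ℝ) y := rc_le_rcSup hφ01 y z
      rw [inf_eq_right.mpr hzI.2, hφz] at this
      linarith
    · push_neg at hzFr
      have hpc := (hconn c' y hc'y).isPreconnected
      have hsub : Icc c' y ⊆ V ∪ (closure V)ᶜ := by
        intro w hw
        by_cases hwc : w ∈ closure V
        · by_cases hwV : w ∈ V
          · exact Or.inl hwV
          · exact absurd ⟨hwc, hwV⟩ (hzFr w hw)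
        · exact Or.inr hwc
      obtain ⟨w, _, hwV, hwnc⟩ := hpc V (closure V)ᶜ hVopen isClosed_closure.isOpen_compl hsub
        ⟨c', ⟨le_refl _, hc'y⟩, hc'V⟩ ⟨y, ⟨hc'y, le_refl _⟩, hyc⟩
      exact hwnc (subset_closure hwV)


lemma rc_family (hmeet : Continuous fun p : X × X => p.1 ⊓ p.2)
    (hconn : ∀ x y : X, x ≤ y → IsConnected (Set.Icc x y)) :
    ∃ u : ℕ → X → ℝ,
      (∀ n, Continuous (u n) ∧ Monotone (u n) ∧ ∀ w, u n w ∈ Icc (0:ℝ) 1) ∧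
      ∀ (U : Set X), IsOpen U → ∀ x ∈ U, ∃ n m : ℕ,
        1/2 < u m x ∧ u n x < 1/2 ∧ ∀ y, 1/2 < u m y → u n y < 1/2 → y ∈ U := by
  classical
  set P : (X → ℝ) → Prop :=
    fun f => Continuous f ∧ Monotone f ∧ ∀ w, f w ∈ Icc (0:ℝ) 1 with hP
  -- countably many pairs suffice for each open set
  have hsel : ∀ B : Set X, IsOpen B → ∃ 𝒢B : Set (X → ℝ), 𝒢B.Countable ∧
      (∀ f ∈ 𝒢B, P f) ∧ ∀ x ∈ B, ∃ f ∈ 𝒢B, ∃ g ∈ 𝒢B,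
        1/2 < g x ∧ f x < 1/2 ∧ ∀ y, 1/2 < g y → f y < 1/2 → y ∈ B := by
    intro B hB
    have key := fun (i : B) => rc_key hmeet hconn hB i.2
    choose F G hF hG hpt himp using key
    set s : B → Set X := fun i => {y | 1/2 < G i y ∧ F i y < 1/2} with hs
    have hsopen : ∀ i, IsOpen (s i) := fun i =>
      (isOpen_lt continuous_const (hG i).1).inter (isOpen_lt (hF i).1 continuous_const)
    obtain ⟨T, hTc, hTeq⟩ := TopologicalSpace.isOpen_iUnion_countable s hsopen
    refine ⟨⋃ i ∈ T, {F i, G i}, hTc.biUnion fun i _ => (Set.Finite.insert _ (Set.finite_singleton _)).countable,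
      ?_, ?_⟩
    · rintro f hf
      simp only [mem_iUnion] at hf
      obtain ⟨i, _, hf⟩ := hf
      rcases hf with rfl | hf
      · exact hF i
      · rw [mem_singleton_iff] at hf; subst hf; exact hG i
    · intro x hxB
      have hxun : x ∈ ⋃ i, s i := mem_iUnion.mpr ⟨⟨x, hxB⟩, (hpt ⟨x, hxB⟩).1, (hpt ⟨x, hxB⟩).2⟩
      rw [← hTeq] at hxun
      simp only [mem_iUnion] at hxun
      obtain ⟨i, hiT, hxi⟩ := hxun
      refine ⟨F i, mem_biUnion hiT (by simp), G i, mem_biUnion hiT (by simp), hxi.1, hxi.2,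
        fun y h1 h2 => himp i y h1 h2⟩
  choose 𝒢 h𝒢c h𝒢P h𝒢 using hsel
  set 𝔅 := countableBasis X with h𝔅
  haveI : Countable ↥𝔅 := (countable_countableBasis X).to_subtype
  set 𝒢all : Set (X → ℝ) :=
    insert (fun _ => 0) (⋃ B : ↥𝔅, 𝒢 B (isOpen_of_mem_countableBasis B.2)) with h𝒢all
  have h𝒢allc : 𝒢all.Countable :=
    (Set.countable_iUnion fun B => h𝒢c _ _).insert _
  have h𝒢allP : ∀ f ∈ 𝒢all, P f := by
    rintro f (rfl | hf)
    · exact ⟨continuous_const, monotone_const, fun w => ⟨le_refl _, zero_le_one⟩⟩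
    · simp only [mem_iUnion] at hf
      obtain ⟨B, hf⟩ := hf
      exact h𝒢P _ _ f hf
  obtain ⟨u, hu⟩ := h𝒢allc.exists_eq_range ⟨_, mem_insert _ _⟩
  refine ⟨u, ?_, ?_⟩
  · intro n
    have : u n ∈ 𝒢all := hu ▸ (mem_range_self n)
    exact h𝒢allP _ this
  · intro U hU x hxU
    obtain ⟨B, hB𝔅, hxB, hBU⟩ :=
      (isBasis_countableBasis X).exists_subset_of_mem_open hxU hU
    obtain ⟨f, hf, g, hg, h1, h2, h3⟩ := h𝒢 B (isOpen_of_mem_countableBasis hB𝔅) x hxB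
    have hfall : f ∈ 𝒢all := mem_insert_iff.mpr (Or.inr (mem_iUnion.mpr ⟨⟨B, hB𝔅⟩, hf⟩))
    have hgall : g ∈ 𝒢all := mem_insert_iff.mpr (Or.inr (mem_iUnion.mpr ⟨⟨B, hB𝔅⟩, hg⟩))
    rw [hu] at hfall hgall
    obtain ⟨n, hn⟩ := hfall
    obtain ⟨m, hm⟩ := hgall
    exact ⟨n, m, hm ▸ h1, hn ▸ h2, fun y hy1 hy2 =>
      hBU (h3 y (by rwa [← hm]) (by rwa [← hn]))⟩


end RC

/-- (Urysohn–Carruth type metrization.)  Let `(X, ≤)` be a locally compact,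
second-countable, order-connected Hausdorff topological ∧-semilattice.  Then there is a metric
on `X` inducing its topology which is radially convex: `x ≤ y ≤ z` implies
`max (dist x y) (dist y z) ≤ dist x z`. -/
theorem exists_radially_convex_metric
    {X : Type*} [SemilatticeInf X] [tX : TopologicalSpace X] [T2Space X]
    [LocallyCompactSpace X] [SecondCountableTopology X]
    (hmeet : Continuous fun p : X × X => p.1 ⊓ p.2)
    (hconn : ∀ x y : X, x ≤ y → IsConnected (Set.Icc x y)) :
    ∃ m : MetricSpace X,
      m.toUniformSpace.toTopologicalSpace = tX ∧
      ∀ x y z : X, x ≤ y → y ≤ z →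
        max (@dist X m.toDist x y) (@dist X m.toDist y z) ≤ @dist X m.toDist x z := by

  classical
  rcases isEmpty_or_nonempty X with hempty | hne
  · -- trivial case: X is empty
    refine ⟨MetricSpace.ofDistTopology (fun _ _ => 0) (fun x => rfl) (fun x y => rfl)
      (fun x y z => by norm_num) (fun s => ?_) (fun x y _ => Subsingleton.elim x y), rfl,
      fun x => isEmptyElim x⟩
    constructor
    · intro _ x hx; exact isEmptyElim x
    · intro _
      have : s = ∅ := Set.eq_empty_of_isEmpty s
      rw [this]; exact isOpen_empty
  · obtain ⟨u, huP, hufam⟩ := rc_family hmeet hconn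
    -- the distance
    set D : X → X → ℝ := fun x y => ∑' n : ℕ, (1/2:ℝ)^n * |u n x - u n y| with hD
    have habs : ∀ n x y, |u n x - u n y| ≤ 1 := by
      intro n x y
      rw [abs_sub_le_iff]
      constructor
      · linarith [(huP n).2.2 x |>.2, (huP n).2.2 y |>.1]
      · linarith [(huP n).2.2 y |>.2, (huP n).2.2 x |>.1]
    have hnn : ∀ n x y, 0 ≤ (1/2:ℝ)^n * |u n x - u n y| := fun n x y => by positivity
    have hle : ∀ n x y, (1/2:ℝ)^n * |u n x - u n y| ≤ (1/2:ℝ)^n := fun n x y => by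
      have h := habs n x y
      have : (0:ℝ) ≤ (1/2:ℝ)^n := by positivity
      nlinarith
    have hsum : ∀ x y, Summable (fun n : ℕ => (1/2:ℝ)^n * |u n x - u n y|) := fun x y =>
      Summable.of_nonneg_of_le (hnn · x y) (hle · x y) summable_geometric_two
    have hterm_le : ∀ n x y, (1/2:ℝ)^n * |u n x - u n y| ≤ D x y := by
      intro n x y
      exact Summable.le_tsum (hsum x y) n fun j _ => hnn j x y
    have hDnn : ∀ x y, 0 ≤ D x y := fun x y => tsum_nonneg (hnn · x y)
    have hself : ∀ x, D x x = 0 := by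
      intro x; simp [hD]
    have hcomm : ∀ x y, D x y = D y x := by
      intro x y
      simp only [hD]
      congr 1
      funext n
      rw [abs_sub_comm]
    have htri : ∀ x y z, D x z ≤ D x y + D y z := by
      intro x y z
      rw [hD, ← Summable.tsum_add (hsum x y) (hsum y z)]
      refine Summable.tsum_le_tsum (fun n => ?_) (hsum x z) ((hsum x y).add (hsum y z))
      rw [← mul_add]
      have h1 : |u n x - u n z| ≤ |u n x - u n y| + |u n y - u n z| := abs_sub_le _ _ _
      have h2 : (0:ℝ) ≤ (1/2:ℝ)^n := by positivity
      nlinarith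
    -- positivity off the diagonal
    have hpos : ∀ x y : X, x ≠ y → 0 < D x y := by
      intro x y hxy
      obtain ⟨U, V, hUo, hVo, hxU, hyV, hUV⟩ := t2_separation hxy
      have hyU : y ∉ U := fun h => (Set.disjoint_left.mp hUV h) hyV
      obtain ⟨n, m, h1, h2, h3⟩ := hufam U hUo x hxU
      have hkey : ¬(1/2 < u m y) ∨ ¬(u n y < 1/2) := by
        by_contra hcon
        push_neg at hcon
        exact hyU (h3 y hcon.1 (lt_of_not_ge fun hl => absurd hcon.2 (not_lt.mpr hl)))
      rcases hkey with hk | hk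
      · push_neg at hk
        have : 0 < |u m x - u m y| := by rw [abs_pos]; intro h0; rw [sub_eq_zero] at h0; linarith
        calc (0:ℝ) < (1/2:ℝ)^m * |u m x - u m y| := by positivity
        _ ≤ D x y := hterm_le m x y
      · push_neg at hk
        have : 0 < |u n x - u n y| := by rw [abs_pos]; intro h0; rw [sub_eq_zero] at h0; linarith
        calc (0:ℝ) < (1/2:ℝ)^n * |u n x - u n y| := by positivity
        _ ≤ D x y := hterm_le n x y
    -- continuity of D in the second variable
    have hcont : ∀ x, Continuous fun y => D x y := by
      intro x
      apply continuous_tsum (u := fun n => (1/2:ℝ)^n)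
        (f := fun n y => (1/2:ℝ)^n * |u n x - u n y|)
      · exact fun n => continuous_const.mul ((continuous_const.sub (huP n).1).abs)
      · exact summable_geometric_two
      · intro n y
        rw [Real.norm_eq_abs, abs_of_nonneg (hnn n x y)]
        exact hle n x y
    -- the topology condition
    have hH : ∀ s : Set X, IsOpen s ↔ ∀ x ∈ s, ∃ ε > 0, ∀ y, D x y < ε → y ∈ s := by
      intro s
      constructor
      · intro hs x hxs
        obtain ⟨n, m, h1, h2, h3⟩ := hufam s hs x hxs
        refine ⟨min ((1/2:ℝ)^n * (1/2 - u n x)) ((1/2:ℝ)^m * (u m x - 1/2)), ?_, ?_⟩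
        · refine lt_min (mul_pos (by positivity) (by linarith)) (mul_pos (by positivity) (by linarith))
        · intro y hy
          have hyn : (1/2:ℝ)^n * |u n x - u n y| < (1/2:ℝ)^n * (1/2 - u n x) :=
            lt_of_le_of_lt (hterm_le n x y) (lt_of_lt_of_le hy (min_le_left _ _))
          have hym : (1/2:ℝ)^m * |u m x - u m y| < (1/2:ℝ)^m * (u m x - 1/2) :=
            lt_of_le_of_lt (hterm_le m x y) (lt_of_lt_of_le hy (min_le_right _ _))
          have hpn : (0:ℝ) < (1/2:ℝ)^n := by positivity
          have hpm : (0:ℝ) < (1/2:ℝ)^m := by positivity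
          have hyn' : |u n x - u n y| < 1/2 - u n x := by
            exact (mul_lt_mul_iff_right₀ hpn).mp hyn
          have hym' : |u m x - u m y| < u m x - 1/2 := by
            exact (mul_lt_mul_iff_right₀ hpm).mp hym
          have h5 : u n y < 1/2 := by
            have := abs_lt.mp hyn'
            linarith [this.1]
          have h6 : 1/2 < u m y := by
            have := abs_lt.mp hym'
            linarith [this.2]
          exact h3 y h6 h5
      · intro hball
        rw [isOpen_iff_forall_mem_open]
        intro x hxs
        obtain ⟨ε, hε, hsub⟩ := hball x hxs
        exact ⟨{y | D x y < ε}, fun y hy => hsub y hy,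
          isOpen_lt (hcont x) continuous_const, by simpa [hself] using hε⟩
    refine ⟨MetricSpace.ofDistTopology D hself hcomm htri hH
      (fun x y h0 => by_contra fun hne => absurd h0 (ne_of_gt (hpos x y hne))), rfl, ?_⟩
    -- radial convexity
    intro x y z hxy hyz
    have hdist : ∀ a b : X, @dist X (MetricSpace.ofDistTopology D hself hcomm htri hH
      (fun x y h0 => by_contra fun hne => absurd h0 (ne_of_gt (hpos x y hne)))).toDist a b
        = D a b := fun a b => rfl
    rw [hdist, hdist, hdist]
    have hterm : ∀ (a b : X), a ≤ b → b ≤ z → x ≤ a →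
        True := fun _ _ _ _ _ => trivial
    apply max_le
    · refine Summable.tsum_le_tsum (fun n => ?_) (hsum x y) (hsum x z)
      have hm := (huP n).2.1
      have h1 : u n x ≤ u n y := hm hxy
      have h2 : u n y ≤ u n z := hm hyz
      have h3 : |u n x - u n y| ≤ |u n x - u n z| := by
        rw [abs_sub_comm (u n x) (u n y), abs_sub_comm (u n x) (u n z),
          abs_of_nonneg (by linarith), abs_of_nonneg (by linarith)]
        linarith
      have h4 : (0:ℝ) ≤ (1/2:ℝ)^n := by positivity
      nlinarith
    · refine Summable.tsum_le_tsum (fun n => ?_) (hsum y z) (hsum x z)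
      have hm := (huP n).2.1
      have h1 : u n x ≤ u n y := hm hxy
      have h2 : u n y ≤ u n z := hm hyz
      have h3 : |u n y - u n z| ≤ |u n x - u n z| := by
        rw [abs_sub_comm (u n y) (u n z), abs_sub_comm (u n x) (u n z),
          abs_of_nonneg (by linarith), abs_of_nonneg (by linarith)]
        linarith
      have h4 : (0:ℝ) ≤ (1/2:ℝ)^n := by positivity
      nlinarith
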